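/- arXiv:0903.2515 — 2 statements merged into one kernel-verified Lean document; each statement's English description precedes it below -/
import Mathlib

section
/- Under the stronger restricted eigenvalue condition RE(s, s, 3, X) with constant K = K(s,s,3,X), on the event ‖Xᵀε/n‖_∞ ≤ λ/2, the Lasso error δ = β_init − β* satisfies ‖δ‖₂ ≤ 16K²λ√s. -/
open Finset Matrix

/-!
Comparing the Lasso objective at `β_init` and at `β*`, and bounding the noise term by
`(λ/2) ‖δ‖₁`, gives the basic inequality `‖Xδ‖² + nλ ‖δ_{Sᶜ}‖₁ ≤ 3nλ ‖δ_S‖₁`. So `δ` lies in the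
cone `‖δ_{Sᶜ}‖₁ ≤ 3 ‖δ_S‖₁`, and for `J` the `s` largest coordinates of `δ` off `S` the RE
condition gives `n ‖δ_{S∪J}‖² ≤ K² ‖Xδ‖² ≤ 3nK²λ √s ‖δ_{S∪J}‖`, i.e. `‖δ_{S∪J}‖ ≤ 3K²λ√s`.
Every coordinate outside `S ∪ J` is at most the average `‖δ_J‖₁ / s`, so the remaining mass
satisfies `s ‖δ_{(S∪J)ᶜ}‖² ≤ ‖δ_{Sᶜ}‖₁² ≤ 9 s ‖δ_S‖²`; hence `‖δ‖ ≤ 4 ‖δ_{S∪J}‖ ≤ 12K²λ√s`.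
-/

namespace Finset

variable {α : Type*}

lemma exists_subset_card_eq_forall_sdiff_le [DecidableEq α] {β : Type*} [LinearOrder β]
    (f : α → β) (T : Finset α) {k : ℕ} (hk : k ≤ #T) :
    ∃ J ⊆ T, #J = k ∧ ∀ a ∈ J, ∀ b ∈ T \ J, f b ≤ f a := by
  induction k with
  | zero => exact ⟨∅, empty_subset _, rfl, by simp⟩
  | succ k ih =>
    obtain ⟨J, hJT, hcard, hJ⟩ := ih (Nat.le_of_succ_le hk)
    obtain ⟨b, hb, hbmax⟩ := exists_max_image (T \ J) f <| by
      rw [← card_pos, card_sdiff_of_subset hJT]; omega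
    have hbJ : b ∉ J := (mem_sdiff.mp hb).2
    refine ⟨insert b J, insert_subset (mem_sdiff.mp hb).1 hJT,
      by rw [card_insert_of_notMem hbJ, hcard], fun a ha c hc => ?_⟩
    have hc' : c ∈ T \ J := by
      simp only [mem_sdiff, mem_insert, not_or] at hc ⊢
      exact ⟨hc.1, hc.2.2⟩
    rcases mem_insert.mp ha with rfl | ha
    · exact hbmax c hc'
    · exact hJ a ha c hc'

lemma sum_mul_le_mul_sum_abs (s : Finset α) {a : α → ℝ} {t : ℝ} (ha : ∀ j ∈ s, |a j| ≤ t)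
    (x : α → ℝ) : ∑ j ∈ s, a j * x j ≤ t * ∑ j ∈ s, |x j| := by
  rw [mul_sum]
  refine sum_le_sum fun j hj => ?_
  calc a j * x j ≤ |a j| * |x j| := by rw [← abs_mul]; exact le_abs_self _
    _ ≤ t * |x j| := mul_le_mul_of_nonneg_right (ha j hj) (abs_nonneg _)

lemma sum_abs_le_sqrt_card_mul_sqrt_sum_sq (s : Finset α) (x : α → ℝ) :
    ∑ j ∈ s, |x j| ≤ √(#s : ℝ) * √(∑ j ∈ s, x j ^ 2) := by
  simpa using Real.sum_mul_le_sqrt_mul_sqrt s (fun _ => 1) (fun j => |x j|)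

lemma card_mul_sum_sq_sdiff_le [DecidableEq α] {T J : Finset α} (x : α → ℝ) (hJ : J ⊆ T)
    (hmax : ∀ a ∈ J, ∀ b ∈ T \ J, |x b| ≤ |x a|) :
    #J * ∑ j ∈ T \ J, x j ^ 2 ≤ (∑ j ∈ T, |x j|) ^ 2 := by
  set top := ∑ j ∈ J, |x j|
  set rest := ∑ j ∈ T \ J, |x j|
  have hentry : ∀ b ∈ T \ J, #J * x b ^ 2 ≤ top * |x b| := fun b hb => by
    have : #J * |x b| ≤ top := by
      simpa using sum_le_sum fun a ha => hmax a ha b hb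
    rw [← sq_abs, sq, ← mul_assoc]
    exact mul_le_mul_of_nonneg_right this (abs_nonneg _)
  have htop : 0 ≤ top := sum_nonneg fun _ _ => abs_nonneg _
  have hrest : 0 ≤ rest := sum_nonneg fun _ _ => abs_nonneg _
  calc (#J : ℝ) * ∑ j ∈ T \ J, x j ^ 2 ≤ top * rest := by
        rw [mul_sum, mul_sum]; exact sum_le_sum hentry
    _ ≤ (top + rest) ^ 2 := by nlinarith
    _ = (∑ j ∈ T, |x j|) ^ 2 := by rw [← sum_sdiff hJ, add_comm]

end Finset

section

variable {m ι : Type*} [Fintype m] [Fintype ι]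

lemma sum_sq_sdiff_le_of_sum_abs_compl_le [DecidableEq ι] {S J : Finset ι} {x : ι → ℝ}
    {c : ℝ} (hS : S.Nonempty) (hcone : ∑ j ∈ Sᶜ, |x j| ≤ c * ∑ j ∈ S, |x j|) (hJ : J ⊆ Sᶜ)
    (hJcard : #J = min #S #Sᶜ) (hmax : ∀ a ∈ J, ∀ b ∈ Sᶜ \ J, |x b| ≤ |x a|) :
    ∑ j ∈ Sᶜ \ J, x j ^ 2 ≤ c ^ 2 * ∑ j ∈ S, x j ^ 2 := by
  rcases (Sᶜ \ J).eq_empty_or_nonempty with hempty | ⟨b, hb⟩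
  · rw [hempty, sum_empty]; positivity
  have hJS : #J = #S := by
    have : #J < #Sᶜ := card_lt_card <| (ssubset_iff_of_subset hJ).mpr ⟨b, mem_sdiff.mp hb⟩
    omega
  have hcone_sq : (∑ j ∈ Sᶜ, |x j|) ^ 2 ≤ c ^ 2 * (∑ j ∈ S, |x j|) ^ 2 := by
    rw [← mul_pow]
    exact pow_le_pow_left₀ (sum_nonneg fun _ _ => abs_nonneg _) hcone 2
  have hCS : (∑ j ∈ S, |x j|) ^ 2 ≤ #S * ∑ j ∈ S, x j ^ 2 := by
    simpa only [sq_abs] using sq_sum_le_card_mul_sum_sq (s := S) (f := fun j => |x j|)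
  have hS' : (0 : ℝ) < #S := by exact_mod_cast hS.card_pos
  refine le_of_mul_le_mul_left ?_ hS'
  calc (#S : ℝ) * ∑ j ∈ Sᶜ \ J, x j ^ 2 ≤ (∑ j ∈ Sᶜ, |x j|) ^ 2 := by
        exact_mod_cast hJS ▸ card_mul_sum_sq_sdiff_le x hJ hmax
    _ ≤ c ^ 2 * (#S * ∑ j ∈ S, x j ^ 2) := hcone_sq.trans (by gcongr)
    _ = #S * (c ^ 2 * ∑ j ∈ S, x j ^ 2) := by ring

lemma sqrt_sum_sq_le_of_sum_abs_compl_le [DecidableEq ι] {S J : Finset ι} {x : ι → ℝ}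
    {c : ℝ} (hc : 0 ≤ c) (hcone : ∑ j ∈ Sᶜ, |x j| ≤ c * ∑ j ∈ S, |x j|) (hJ : J ⊆ Sᶜ)
    (hJcard : #J = min #S #Sᶜ) (hmax : ∀ a ∈ J, ∀ b ∈ Sᶜ \ J, |x b| ≤ |x a|) :
    √(∑ j, x j ^ 2) ≤ (1 + c) * √(∑ j ∈ S ∪ J, x j ^ 2) := by
  rcases S.eq_empty_or_nonempty with rfl | hS
  · simp only [compl_empty, sum_empty, mul_zero] at hcone
    have hx := (sum_eq_zero_iff_of_nonneg fun j _ => abs_nonneg (x j)).mp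
      (le_antisymm hcone (sum_nonneg fun _ _ => abs_nonneg _))
    simp_all
  have htail := sum_sq_sdiff_le_of_sum_abs_compl_le hS hcone hJ hJcard hmax
  have hsplit : ∑ j, x j ^ 2 = ∑ j ∈ S ∪ J, x j ^ 2 + ∑ j ∈ Sᶜ \ J, x j ^ 2 := by
    rw [← sum_add_sum_compl (S ∪ J), compl_union, sdiff_eq_inter_compl]
  have hSJ : ∑ j ∈ S, x j ^ 2 ≤ ∑ j ∈ S ∪ J, x j ^ 2 :=
    sum_le_sum_of_subset_of_nonneg subset_union_left fun _ _ _ => sq_nonneg _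
  rw [← Real.sqrt_sq (by positivity : 0 ≤ 1 + c), ← Real.sqrt_mul (sq_nonneg _)]
  refine Real.sqrt_le_sqrt ?_
  rw [hsplit]
  nlinarith [sum_nonneg fun j (_ : j ∈ S ∪ J) => sq_nonneg (x j)]

lemma sum_abs_sub_sum_abs_le_of_eq_zero [DecidableEq ι] {S : Finset ι} {b c : ι → ℝ}
    (hb : ∀ j ∉ S, b j = 0) :
    ∑ j, |b j| - ∑ j, |c j| ≤ ∑ j ∈ S, |c j - b j| - ∑ j ∈ Sᶜ, |c j - b j| := by
  rw [← sum_add_sum_compl S (fun j => |b j|), ← sum_add_sum_compl S (fun j => |c j|)]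
  have hcompl : ∀ j ∈ Sᶜ, |c j - b j| = |c j| := fun j hj => by
    rw [hb j (mem_compl.mp hj), sub_zero]
  have hon : ∑ j ∈ S, |b j| - ∑ j ∈ S, |c j| ≤ ∑ j ∈ S, |c j - b j| := by
    rw [← sum_sub_distrib]
    exact sum_le_sum fun j _ => abs_sub_comm (c j) (b j) ▸ abs_sub_abs_le_abs_sub _ _
  have hb0 : ∑ j ∈ Sᶜ, |b j| = 0 :=
    sum_eq_zero fun j hj => by rw [hb j (mem_compl.mp hj), abs_zero]
  rw [sum_congr rfl hcompl, hb0]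
  linarith

lemma lasso_basic_inequality [DecidableEq ι] {N lam : ℝ} (hN : 0 < N) (hlam : 0 ≤ lam)
    (X : Matrix m ι ℝ) (ε : m → ℝ) (hnoise : ∀ j, |(Xᵀ *ᵥ ε) j / N| ≤ lam / 2) {βstar βhat : ι → ℝ}
    {S : Finset ι} (hS : ∀ j ∉ S, βstar j = 0)
    (hmin : 1 / (2 * N) * ∑ i, ((X *ᵥ βstar) i + ε i - (X *ᵥ βhat) i) ^ 2
        + lam * ∑ j, |βhat j| ≤
      1 / (2 * N) * ∑ i, ((X *ᵥ βstar) i + ε i - (X *ᵥ βstar) i) ^ 2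
        + lam * ∑ j, |βstar j|) :
    ∑ i, (X *ᵥ (βhat - βstar)) i ^ 2 + N * lam * ∑ j ∈ Sᶜ, |βhat j - βstar j| ≤
      3 * N * lam * ∑ j ∈ S, |βhat j - βstar j| := by
  set δ := βhat - βstar
  set v := X *ᵥ δ
  have hres : ∀ i, (X *ᵥ βstar) i + ε i - (X *ᵥ βhat) i = ε i - v i := fun i => by
    simp only [v, δ, mulVec_sub, Pi.sub_apply]; ring
  have hexpand : ∑ i, (ε i - v i) ^ 2 = ∑ i, ε i ^ 2 - 2 * (ε ⬝ᵥ v) + ∑ i, v i ^ 2 := by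
    simp only [dotProduct, mul_sum, ← sum_sub_distrib, ← sum_add_distrib]
    exact sum_congr rfl fun i _ => by ring
  have hcross : ε ⬝ᵥ v / N ≤ lam / 2 * ∑ j, |δ j| := by
    rw [dotProduct_mulVec, ← mulVec_transpose, dotProduct, sum_div]
    simpa only [div_mul_eq_mul_div] using
      sum_mul_le_mul_sum_abs univ (fun j _ => hnoise j) δ
  have hpen := sum_abs_sub_sum_abs_le_of_eq_zero (c := βhat) hS
  simp only [hres, add_sub_cancel_left, hexpand] at hmin
  rw [← sum_add_sum_compl S] at hcross
  set Q := ∑ i, v i ^ 2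
  have hQ_le : Q ≤ 2 * (ε ⬝ᵥ v) + 2 * N * (lam * (∑ j, |βstar j| - ∑ j, |βhat j|)) := by
    have := mul_le_mul_of_nonneg_left hmin (by positivity : (0 : ℝ) ≤ 2 * N)
    field_simp at this
    linarith
  have hcross' : 2 * (ε ⬝ᵥ v) ≤ N * lam * (∑ j ∈ S, |δ j| + ∑ j ∈ Sᶜ, |δ j|) := by
    rw [div_le_iff₀ hN] at hcross; linarith
  have hpen' := mul_le_mul_of_nonneg_left (mul_le_mul_of_nonneg_left hpen hlam)
    (by positivity : (0 : ℝ) ≤ 2 * N)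
  simp only [δ, Pi.sub_apply] at hcross'
  linarith

lemma sqrt_sum_sq_le_of_restricted_eigenvalue {N K c : ℝ} (hN : 0 < N) (hc : 0 ≤ c)
    (X : Matrix m ι ℝ) {δ : ι → ℝ} {S T : Finset ι} (hST : S ⊆ T)
    (hRE : √N * √(∑ j ∈ T, δ j ^ 2) ≤ K * √(∑ i, (X *ᵥ δ) i ^ 2))
    (hpred : ∑ i, (X *ᵥ δ) i ^ 2 ≤ c * N * ∑ j ∈ S, |δ j|) :
    √(∑ j ∈ T, δ j ^ 2) ≤ c * K ^ 2 * √(#S : ℝ) := by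
  set w := √(∑ j ∈ T, δ j ^ 2)
  have hw : 0 ≤ w := Real.sqrt_nonneg _
  have hS : ∑ j ∈ S, |δ j| ≤ √(#S : ℝ) * w := (sum_abs_le_sqrt_card_mul_sqrt_sum_sq S δ).trans <|
    mul_le_mul_of_nonneg_left (Real.sqrt_le_sqrt <| sum_le_sum_of_subset_of_nonneg hST
      fun _ _ _ => sq_nonneg _) (Real.sqrt_nonneg _)
  have hsq : N * w ^ 2 ≤ N * (c * K ^ 2 * √(#S : ℝ) * w) := calc
    N * w ^ 2 = (√N * w) ^ 2 := by rw [mul_pow, Real.sq_sqrt hN.le]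
    _ ≤ (K * √(∑ i, (X *ᵥ δ) i ^ 2)) ^ 2 := pow_le_pow_left₀ (by positivity) hRE 2
    _ = K ^ 2 * ∑ i, (X *ᵥ δ) i ^ 2 := by rw [mul_pow, Real.sq_sqrt (by positivity)]
    _ ≤ K ^ 2 * (c * N * (√(#S : ℝ) * w)) := by gcongr; exact hpred.trans (by gcongr)
    _ = N * (c * K ^ 2 * √(#S : ℝ) * w) := by ring
  have hw_sq := le_of_mul_le_mul_left hsq hN
  have hbound : 0 ≤ c * K ^ 2 * √(#S : ℝ) := by positivity
  nlinarith

end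

theorem lasso_full_l2_error_bound_general (n p : ℕ) (hn : 0 < n)
    (X : Matrix (Fin n) (Fin p) ℝ) (βstar : Fin p → ℝ) (ε : Fin n → ℝ)
    (lam : ℝ) (hlam : 0 < lam)
    (hnoise : ∀ j : Fin p, |(∑ i, X i j * ε i) / n| ≤ lam / 2)
    (βinit : Fin p → ℝ)
    (hmin : ∀ β : Fin p → ℝ,
      (1 / (2 * n)) * (∑ i, ((∑ j, X i j * βstar j) + ε i - ∑ j, X i j * βinit j) ^ 2)
          + lam * ∑ j, |βinit j| ≤
        (1 / (2 * n)) * (∑ i, ((∑ j, X i j * βstar j) + ε i - ∑ j, X i j * β j) ^ 2)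
          + lam * ∑ j, |β j|)
    (S : Finset (Fin p)) (hS : S = Finset.univ.filter (fun j => βstar j ≠ 0))
    (K : ℝ)
    (hRE : ∀ J₀ : Finset (Fin p), J₀.card ≤ S.card →
      ∀ γ : Fin p → ℝ, γ ≠ 0 →
        (∑ j ∈ J₀ᶜ, |γ j|) ≤ 3 * ∑ j ∈ J₀, |γ j| →
        ∀ J₁ : Finset (Fin p), J₁ ⊆ J₀ᶜ → J₁.card ≤ S.card →
          (∀ a ∈ J₁, ∀ b ∈ J₀ᶜ \ J₁, |γ b| ≤ |γ a|) →
          Real.sqrt n * Real.sqrt (∑ j ∈ J₀ ∪ J₁, γ j ^ 2) ≤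
            K * Real.sqrt (∑ i, (∑ j, X i j * γ j) ^ 2)) :
    Real.sqrt (∑ j, (βinit j - βstar j) ^ 2) ≤
      16 * K ^ 2 * lam * Real.sqrt S.card := by
  set δ := βinit - βstar
  set A := ∑ j ∈ S, |δ j|
  have hβstar : ∀ j ∉ S, βstar j = 0 := fun j hj => by simpa [hS] using hj
  have hbasic : ∑ i, (X *ᵥ δ) i ^ 2 + n * lam * ∑ j ∈ Sᶜ, |δ j| ≤ 3 * n * lam * A :=
    lasso_basic_inequality (by positivity) hlam.le X ε hnoise hβstar (hmin βstar)
  have hQ0 : 0 ≤ ∑ i, (X *ᵥ δ) i ^ 2 := sum_nonneg fun _ _ => sq_nonneg _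
  have hcone : ∑ j ∈ Sᶜ, |δ j| ≤ 3 * A :=
    le_of_mul_le_mul_left (by linarith) (by positivity : (0 : ℝ) < n * lam)
  have hpred : ∑ i, (X *ᵥ δ) i ^ 2 ≤ 3 * lam * n * A := by
    have : 0 ≤ n * lam * ∑ j ∈ Sᶜ, |δ j| := by positivity
    linarith
  have hc : 0 ≤ K ^ 2 * lam * √(#S : ℝ) := by positivity
  show √(∑ j, δ j ^ 2) ≤ _
  by_cases hδ : δ = 0
  · simpa [hδ] using by linarith
  obtain ⟨J, hJ, hJcard, hmax⟩ :=
    exists_subset_card_eq_forall_sdiff_le (|δ ·|) Sᶜ (min_le_right #S #Sᶜ)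
  have hw := sqrt_sum_sq_le_of_restricted_eigenvalue (by positivity) (by positivity) X
    subset_union_left (hRE S le_rfl δ hδ hcone J hJ (hJcard ▸ min_le_left _ _) hmax) hpred
  calc √(∑ j, δ j ^ 2) ≤ (1 + 3) * √(∑ j ∈ S ∪ J, δ j ^ 2) :=
        sqrt_sum_sq_le_of_sum_abs_compl_le (by norm_num) hcone hJ hJcard hmax
    _ ≤ 16 * K ^ 2 * lam * √(#S : ℝ) := by nlinarith

/-- ℓ₂ bound for the full Lasso error under the stronger condition
`RE(s, s, 3, X)` with constant `K`: on the event `‖Xᵀε/n‖_∞ ≤ λ/2`, with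
`S = supp(β*)` and `s = |S|`, the Lasso error `δ = β_init − β*` satisfies
`‖δ‖₂ ≤ 16 K² λ √s`. -/
theorem lasso_full_l2_error_bound (n p : ℕ) (hn : 0 < n)
    (X : Matrix (Fin n) (Fin p) ℝ) (βstar : Fin p → ℝ) (ε : Fin n → ℝ)
    (lam : ℝ) (hlam : 0 < lam)
    (hnoise : ∀ j : Fin p, |(∑ i, X i j * ε i) / n| ≤ lam / 2)
    (βinit : Fin p → ℝ)
    (hmin : ∀ β : Fin p → ℝ,
      (1 / (2 * n)) * (∑ i, ((∑ j, X i j * βstar j) + ε i - ∑ j, X i j * βinit j) ^ 2)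
          + lam * ∑ j, |βinit j| ≤
        (1 / (2 * n)) * (∑ i, ((∑ j, X i j * βstar j) + ε i - ∑ j, X i j * β j) ^ 2)
          + lam * ∑ j, |β j|)
    (S : Finset (Fin p)) (hS : S = Finset.univ.filter (fun j => βstar j ≠ 0))
    (K : ℝ) (hK : 0 < K)
    (hRE : ∀ J₀ : Finset (Fin p), J₀.card ≤ S.card →
      ∀ γ : Fin p → ℝ, γ ≠ 0 →
        (∑ j ∈ J₀ᶜ, |γ j|) ≤ 3 * ∑ j ∈ J₀, |γ j| →
        ∀ J₁ : Finset (Fin p), J₁ ⊆ J₀ᶜ → J₁.card ≤ S.card →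
          (∀ a ∈ J₁, ∀ b ∈ J₀ᶜ \ J₁, |γ b| ≤ |γ a|) →
          Real.sqrt n * Real.sqrt (∑ j ∈ J₀ ∪ J₁, γ j ^ 2) ≤
            K * Real.sqrt (∑ i, (∑ j, X i j * γ j) ^ 2)) :
    Real.sqrt (∑ j, (βinit j - βstar j) ^ 2) ≤
      16 * K ^ 2 * lam * Real.sqrt S.card :=
  lasso_full_l2_error_bound_general n p hn X βstar ε lam hlam hnoise βinit hmin S hS K hRE
end

section
/- (Deterministic part of the sign recovery lemma.) Under the KKT characterization, suppose (a) for every j ∈ Sᶜ, |X_jᵀX_S(X_SᵀX_S)⁻¹b| ≤ w_j(1−η) for some η ∈ (0,1), (b) the 'noise' terms satisfy |X_jᵀ(I − P_S)ε/n| ≤ ηλ w_min(Sᶜ)/2 for all j ∈ Sᶜ, and (c) ‖(X_SᵀX_S/n)⁻¹‖_∞ · ( ‖X_Sᵀε/n‖_∞ + λ w_max(S) ) < β_min. Then conditions (i) and (ii) of the KKT characterization hold, and hence there is a weighted-Lasso solution with sgn(β̂) = sgn(β*); moreover (i) holds with strict inequality. -/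
/-!
The candidate solution is `β̂ = β* + v`, where `v` is supported on `S` and solves the restricted
stationarity equation `X_Sᵀ(y - Xβ̂) = nλ b` with the signs of `β*` frozen. Condition (c) bounds
`‖v‖_∞` below `β_min`, so `β̂` keeps the signs of `β*`. Off the support the residual splits as
`(I - P_S)ε + nλ X_S(X_SᵀX_S)⁻¹b`, and (a), (b) keep its correlation with `X_j` strictly below
`nλw_j`. These are the subgradient (KKT) conditions of the convex weighted-Lasso objective, which
are sufficient for optimality.
-/

open Finset Matrix

noncomputable def sgn (x : ℝ) : ℝ := if 0 < x then 1 else if x < 0 then -1 else 0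

theorem sgn_mul_self (x : ℝ) : sgn x * x = |x| := by
  unfold sgn
  split_ifs <;> cases abs_cases x <;> linarith

theorem abs_sgn_mul_le (x y : ℝ) : |sgn x * y| ≤ |y| := by
  rw [abs_mul]
  refine mul_le_of_le_one_left (abs_nonneg y) ?_
  unfold sgn
  split_ifs <;> norm_num

theorem sgn_add_of_abs_lt {s t : ℝ} (h : |t| < |s|) : sgn (s + t) = sgn s := by
  unfold sgn
  split_ifs <;> cases abs_cases s <;> cases abs_cases t <;> linarith

theorem abs_sub_mul_sgn_mul_le (a x y : ℝ) {lam : ℝ} (hlam : 0 ≤ lam) :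
    |a - lam * (sgn x * y)| ≤ |a| + lam * |y| := by
  refine (abs_sub _ _).trans (add_le_add_right ?_ _)
  rw [abs_mul, abs_of_nonneg hlam]
  exact mul_le_mul_of_nonneg_left (abs_sgn_mul_le x y) hlam

theorem abs_mulVec_apply_le_sup'_mul {m κ : Type*} [Fintype m] [Fintype κ] (M : Matrix m κ ℝ)
    {u : κ → ℝ} {C : ℝ} (hu : ∀ l, |u l| ≤ C) (hne : (univ : Finset m).Nonempty) (k : m) :
    |(M *ᵥ u) k| ≤ univ.sup' hne (fun k => ∑ l, |M k l|) * C := by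
  calc |(M *ᵥ u) k| ≤ ∑ l, |M k l * u l| := abs_sum_le_sum_abs _ _
    _ ≤ ∑ l, |M k l| * C := by
        gcongr with l
        rw [abs_mul]
        exact mul_le_mul_of_nonneg_left (hu l) (abs_nonneg _)
    _ = (∑ l, |M k l|) * C := (sum_mul _ _ _).symm
    _ ≤ univ.sup' hne (fun k => ∑ l, |M k l|) * C := by
        rcases isEmpty_or_nonempty κ with hκ | ⟨⟨l⟩⟩
        · simp
        have := (abs_nonneg _).trans (hu l)
        gcongr
        exact le_sup' (fun k => ∑ l, |M k l|) (mem_univ k)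

section LeastSquares

variable {ι κ : Type*} [Fintype ι] [Fintype κ] [DecidableEq κ]
variable (XS : Matrix ι κ ℝ) (ε : ι → ℝ)

theorem transpose_mulVec_sub_mulVec_inv_smul (hA : IsUnit (XSᵀ * XS).det) {s : ℝ} (hs : s ≠ 0)
    (u : κ → ℝ) :
    XSᵀ *ᵥ (ε - XS *ᵥ ((s • (XSᵀ * XS))⁻¹ *ᵥ u)) = XSᵀ *ᵥ ε - s⁻¹ • u := by
  have := invertibleOfNonzero hs
  rw [inv_smul (A := XSᵀ * XS) s hA, invOf_eq_inv, mulVec_sub, mulVec_mulVec, smul_mulVec,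
    mulVec_smul, mulVec_mulVec, mul_nonsing_inv _ hA, one_mulVec]

theorem residual_eq_of_transpose_mulVec_residual (hA : IsUnit (XSᵀ * XS).det) {v b : κ → ℝ}
    {c : ℝ} (hstat : XSᵀ *ᵥ (ε - XS *ᵥ v) = c • b) :
    ε - XS *ᵥ v = (ε - XS *ᵥ ((XSᵀ * XS)⁻¹ *ᵥ (XSᵀ *ᵥ ε))) + c • XS *ᵥ ((XSᵀ * XS)⁻¹ *ᵥ b) := by
  have hAv : (XSᵀ * XS) *ᵥ v = XSᵀ *ᵥ ε - c • b := by
    rw [← hstat, mulVec_sub, mulVec_mulVec, sub_sub_cancel]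
  have hv : v = (XSᵀ * XS)⁻¹ *ᵥ (XSᵀ *ᵥ ε - c • b) := by
    rw [← hAv, mulVec_mulVec, nonsing_inv_mul _ hA, one_mulVec]
  rw [hv, mulVec_sub, mulVec_smul, mulVec_sub, mulVec_smul]
  abel

theorem abs_dotProduct_residual_le (hA : IsUnit (XSᵀ * XS).det) {v b : κ → ℝ}
    {c : ℝ} (hstat : XSᵀ *ᵥ (ε - XS *ᵥ v) = c • b) (x : ι → ℝ) :
    |x ⬝ᵥ (ε - XS *ᵥ v)| ≤ |x ⬝ᵥ (ε - XS *ᵥ ((XSᵀ * XS)⁻¹ *ᵥ (XSᵀ *ᵥ ε)))|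
      + |c| * |x ⬝ᵥ (XS *ᵥ ((XSᵀ * XS)⁻¹ *ᵥ b))| := by
  rw [residual_eq_of_transpose_mulVec_residual XS ε hA hstat, dotProduct_add, dotProduct_smul,
    smul_eq_mul, ← abs_mul]
  exact abs_add_le _ _

theorem abs_dotProduct_residual_lt (hA : IsUnit (XSᵀ * XS).det) {v b : κ → ℝ}
    {N lam η wj : ℝ} (hN : 0 < N) (hlam : 0 < lam) (hη : 0 < η) (hwj : 0 < wj)
    (hstat : XSᵀ *ᵥ (ε - XS *ᵥ v) = (N * lam) • b) (x : ι → ℝ)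
    (hnoise : |x ⬝ᵥ (ε - XS *ᵥ ((XSᵀ * XS)⁻¹ *ᵥ (XSᵀ *ᵥ ε)))| / N ≤ η * lam * wj / 2)
    (hincoh : |x ⬝ᵥ (XS *ᵥ ((XSᵀ * XS)⁻¹ *ᵥ b))| ≤ wj * (1 - η)) :
    |x ⬝ᵥ (ε - XS *ᵥ v)| < N * lam * wj := by
  have hsplit := abs_dotProduct_residual_le XS ε hA hstat x
  rw [abs_of_pos (by positivity : 0 < N * lam)] at hsplit
  rw [div_le_iff₀ hN] at hnoise
  have hincoh' := mul_le_mul_of_nonneg_left hincoh (by positivity : 0 ≤ N * lam)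
  have hgap : 0 < N * lam * wj * η := by positivity
  linarith

end LeastSquares

section WeightedLasso

variable {ι κ : Type*} [Fintype κ]

theorem mulVec_extend_subtype_val (X : Matrix ι κ ℝ) (S : Finset κ) (v : S → ℝ) :
    X *ᵥ Subtype.val.extend v 0 = X.submatrix id Subtype.val *ᵥ v := by
  funext i
  simp only [mulVec, dotProduct, submatrix_apply, id]
  rw [← sum_subset (subset_univ S), ← sum_coe_sort S]
  · simp
  · intro j _ hj
    rw [Function.extend_val_apply' hj, Pi.zero_apply, mul_zero]

variable [Fintype ι]

noncomputable def weightedLassoObjective (X : Matrix ι κ ℝ) (y : ι → ℝ) (N lam : ℝ)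
    (w β : κ → ℝ) : ℝ :=
  1 / (2 * N) * ∑ i, (y i - (X *ᵥ β) i) ^ 2 + lam * ∑ j, w j * |β j|

theorem weightedLassoObjective_le_of_kkt (X : Matrix ι κ ℝ) (y : ι → ℝ) {N lam : ℝ} (hN : 0 < N)
    {w βhat : κ → ℝ} (hbound : ∀ j, |(Xᵀ *ᵥ (y - X *ᵥ βhat)) j| ≤ N * lam * w j)
    (hactive : ∀ j, βhat j ≠ 0 → (Xᵀ *ᵥ (y - X *ᵥ βhat)) j = N * lam * w j * sgn (βhat j))
    (β : κ → ℝ) :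
    weightedLassoObjective X y N lam w βhat ≤ weightedLassoObjective X y N lam w β := by
  set r := y - X *ᵥ βhat
  set G := Xᵀ *ᵥ r
  set d := β - βhat
  have hlin : G ⬝ᵥ d ≤ N * lam * (∑ j, w j * |β j| - ∑ j, w j * |βhat j|) := by
    rw [← sum_sub_distrib, mul_sum]
    refine sum_le_sum fun j _ => ?_
    have hGβhat : G j * βhat j = N * lam * w j * |βhat j| := by
      rcases eq_or_ne (βhat j) 0 with h | h
      · simp [h]
      · rw [hactive j h, mul_assoc, sgn_mul_self]
    have hGβ : G j * β j ≤ N * lam * w j * |β j| := by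
      refine (le_abs_self _).trans ?_
      rw [abs_mul]
      exact mul_le_mul_of_nonneg_right (hbound j) (abs_nonneg _)
    change G j * (β j - βhat j) ≤ _
    linarith
  have hquad : ∑ i, r i ^ 2 - 2 * (G ⬝ᵥ d) ≤ ∑ i, (y i - (X *ᵥ β) i) ^ 2 := by
    have hcross : G ⬝ᵥ d = ∑ i, r i * (X *ᵥ d) i := by
      rw [show G = r ᵥ* X from mulVec_transpose X r, ← dotProduct_mulVec]
      rfl
    have hfit : ∀ i, y i - (X *ᵥ β) i = r i - (X *ᵥ d) i := fun i => by
      simp only [r, d, mulVec_sub, Pi.sub_apply]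
      ring
    rw [hcross, mul_sum, ← sum_sub_distrib]
    refine sum_le_sum fun i _ => ?_
    rw [hfit i]
    nlinarith [sq_nonneg ((X *ᵥ d) i)]
  have hsq : ∑ i, r i ^ 2 ≤ ∑ i, (y i - (X *ᵥ β) i) ^ 2
      + 2 * N * (lam * (∑ j, w j * |β j| - ∑ j, w j * |βhat j|)) := by
    linarith
  calc 1 / (2 * N) * ∑ i, r i ^ 2 + lam * ∑ j, w j * |βhat j|
      ≤ 1 / (2 * N) * (∑ i, (y i - (X *ᵥ β) i) ^ 2
          + 2 * N * (lam * (∑ j, w j * |β j| - ∑ j, w j * |βhat j|)))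
        + lam * ∑ j, w j * |βhat j| := by gcongr
    _ = weightedLassoObjective X y N lam w β := by
      rw [weightedLassoObjective]
      field_simp
      ring

theorem exists_weightedLasso_minimizer_sgn_eq (X : Matrix ι κ ℝ) (S : Finset κ)
    {βstar : κ → ℝ} (hstar : ∀ j ∉ S, βstar j = 0) (ε : ι → ℝ) (v : S → ℝ) {N lam : ℝ}
    (hN : 0 < N) (hlam : 0 ≤ lam) {w : κ → ℝ} (hw : ∀ j, 0 ≤ w j)
    (hsgn : ∀ k : S, sgn (βstar k + v k) = sgn (βstar k))
    (hstat : (X.submatrix id Subtype.val)ᵀ *ᵥ (ε - X.submatrix id Subtype.val *ᵥ v)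
      = (N * lam) • fun k : S => sgn (βstar k) * w k)
    (hoff : ∀ j ∉ S, |(Xᵀ *ᵥ (ε - X.submatrix id Subtype.val *ᵥ v)) j| ≤ N * lam * w j) :
    ∃ βhat, (∀ β, weightedLassoObjective X (X *ᵥ βstar + ε) N lam w βhat
        ≤ weightedLassoObjective X (X *ᵥ βstar + ε) N lam w β) ∧
      ∀ j, sgn (βhat j) = sgn (βstar j) := by
  set βhat := βstar + Subtype.val.extend v 0
  have hres : X *ᵥ βstar + ε - X *ᵥ βhat = ε - X.submatrix id Subtype.val *ᵥ v := by
    rw [mulVec_add, mulVec_extend_subtype_val]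
    abel
  have hG : ∀ k : S,
      (Xᵀ *ᵥ (X *ᵥ βstar + ε - X *ᵥ βhat)) k = N * lam * (sgn (βstar k) * w k) := fun k => by
    rw [hres]
    exact congrFun hstat k
  have hβhat_mem : ∀ k : S, βhat k = βstar k + v k := fun k => by
    simp [βhat]
  have hβhat_not_mem : ∀ j ∉ S, βhat j = 0 := fun j hj => by
    simp [βhat, hstar j hj, Function.extend_val_apply' hj]
  have hsgn_eq : ∀ j, sgn (βhat j) = sgn (βstar j) := fun j => by
    by_cases hj : j ∈ S
    · rw [hβhat_mem ⟨j, hj⟩]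
      exact hsgn ⟨j, hj⟩
    · rw [hβhat_not_mem j hj, hstar j hj]
  refine ⟨βhat, weightedLassoObjective_le_of_kkt X _ hN (fun j => ?_) (fun j hj => ?_), hsgn_eq⟩
  · by_cases hj : j ∈ S
    · rw [hG ⟨j, hj⟩, abs_mul, abs_of_nonneg (by positivity : 0 ≤ N * lam)]
      exact mul_le_mul_of_nonneg_left ((abs_sgn_mul_le _ _).trans_eq (abs_of_nonneg (hw j)))
        (by positivity)
    · rw [hres]
      exact hoff j hj
  · have hjS : j ∈ S := by_contra fun h => hj (hβhat_not_mem j h)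
    rw [hG ⟨j, hjS⟩, hsgn_eq]
    ring

end WeightedLasso

theorem sign_recovery_deterministic_general (n p : ℕ) (hn : 0 < n)
    (X : Matrix (Fin n) (Fin p) ℝ) (βstar : Fin p → ℝ) (ε : Fin n → ℝ)
    (w : Fin p → ℝ) (hw : ∀ j, 0 < w j) (lam : ℝ) (hlam : 0 < lam)
    (η : ℝ) (hη : 0 < η)
    (S : Finset (Fin p)) (hS : S = Finset.univ.filter (fun j => βstar j ≠ 0))
    (hSne : S.Nonempty) (hScne : Sᶜ.Nonempty)
    (XS : Matrix (Fin n) {j // j ∈ S} ℝ) (hXS : XS = Matrix.of fun i j => X i j.1)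
    (hinv : IsUnit (XSᵀ * XS).det)
    (ha : ∀ j ∉ S,
      |∑ i, X i j *
          (XS.mulVec ((XSᵀ * XS)⁻¹.mulVec
            (fun k => sgn (βstar k.1) * w k.1))) i| ≤ w j * (1 - η))
    (hb : ∀ j ∉ S,
      |∑ i, X i j *
          (ε i - XS.mulVec ((XSᵀ * XS)⁻¹.mulVec (XSᵀ.mulVec ε)) i)| / n ≤
        η * lam * (Sᶜ.inf' hScne w) / 2)
    (hc : (Finset.univ.sup' (univ_nonempty_iff.mpr hSne.to_subtype)
            (fun k => ∑ l, |((1 / (n : ℝ)) • (XSᵀ * XS))⁻¹ k l|)) *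
          ((Finset.univ.sup' (univ_nonempty_iff.mpr hSne.to_subtype)
            (fun k : {j // j ∈ S} => |(∑ i, X i k.1 * ε i) / n|)) +
            lam * S.sup' hSne w) <
        S.inf' hSne (fun j => |βstar j|))
    (v : {j // j ∈ S} → ℝ)
    (hv : v = ((1 / (n : ℝ)) • (XSᵀ * XS))⁻¹.mulVec
      (fun k => (∑ i, X i k.1 * ε i) / n - lam * (sgn (βstar k.1) * w k.1))) :
    (∀ j ∉ S,
        |(∑ i, X i j * XS.mulVec v i) / n - (∑ i, X i j * ε i) / n| < lam * w j) ∧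
      (∀ k : {j // j ∈ S}, sgn (βstar k.1 + v k) = sgn (βstar k.1)) ∧
      ∃ βhat : Fin p → ℝ,
        (∀ β : Fin p → ℝ,
          (1 / (2 * n)) *
              (∑ i, ((∑ j, X i j * βstar j) + ε i - ∑ j, X i j * βhat j) ^ 2)
            + lam * ∑ j, w j * |βhat j| ≤
          (1 / (2 * n)) *
              (∑ i, ((∑ j, X i j * βstar j) + ε i - ∑ j, X i j * β j) ^ 2)
            + lam * ∑ j, w j * |β j|) ∧
        ∀ j, sgn (βhat j) = sgn (βstar j) := by
  have hn' : (0 : ℝ) < n := Nat.cast_pos.mpr hn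
  have hstar : ∀ j ∉ S, βstar j = 0 := fun j hj => by simpa [hS] using hj
  have hstat : XSᵀ *ᵥ (ε - XS *ᵥ v) = (n * lam) • fun k : S => sgn (βstar k) * w k := by
    rw [hv, transpose_mulVec_sub_mulVec_inv_smul _ _ hinv (by positivity)]
    funext k
    simp only [hXS, one_div, inv_inv, Pi.sub_apply, mulVec, dotProduct, transpose_apply,
      of_apply, Pi.smul_apply, smul_eq_mul]
    field_simp
    ring
  have hoff : ∀ j ∉ S, |∑ i, X i j * (ε i - (XS *ᵥ v) i)| < n * lam * w j := fun j hj =>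
    abs_dotProduct_residual_lt XS ε hinv hn' hlam hη (hw j) hstat (fun i => X i j)
      ((hb j hj).trans (by gcongr; exact inf'_le w (mem_compl.2 hj))) (ha j hj)
  have hdual : ∀ j ∉ S,
      |(∑ i, X i j * XS.mulVec v i) / n - (∑ i, X i j * ε i) / n| < lam * w j := by
    intro j hj
    rw [← sub_div, abs_div, abs_of_pos hn', div_lt_iff₀ hn', abs_sub_comm, ← sum_sub_distrib]
    simp_rw [← mul_sub]
    linarith [hoff j hj]
  have hsmall : ∀ k : S, |v k| < |βstar k| := fun k => by
    refine ((hv ▸ abs_mulVec_apply_le_sup'_mul _ (fun l => ?_) _ k).trans_lt hc).trans_le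
      (inf'_le _ k.2)
    refine (abs_sub_mul_sgn_mul_le _ _ _ hlam.le).trans (add_le_add ?_ ?_)
    · exact le_sup' (fun k : S => |(∑ i, X i k * ε i) / n|) (mem_univ l)
    · exact mul_le_mul_of_nonneg_left ((abs_of_pos (hw l)).trans_le (le_sup' w l.2)) hlam.le
  have hsign : ∀ k : S, sgn (βstar k + v k) = sgn (βstar k) :=
    fun k => sgn_add_of_abs_lt (hsmall k)
  subst hXS
  obtain ⟨βhat, hopt, hβhat⟩ := exists_weightedLasso_minimizer_sgn_eq X S hstar ε v hn'
    hlam.le (fun j => (hw j).le) hsign hstat fun j hj => (hoff j hj).le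
  exact ⟨hdual, hsign, βhat, hopt, hβhat⟩

/-- Deterministic part of the sign recovery lemma: under
(a) the weighted incoherence `|X_jᵀX_S(X_SᵀX_S)⁻¹b| ≤ w_j(1−η)` for `j ∈ Sᶜ`,
(b) the noise bound `|X_jᵀ(I−P_S)ε/n| ≤ ηλ w_min(Sᶜ)/2` for `j ∈ Sᶜ`, and
(c) `‖(X_SᵀX_S/n)⁻¹‖_∞ (‖X_Sᵀε/n‖_∞ + λ w_max(S)) < β_min`,
the KKT conditions (i) (strictly) and (ii) hold, hence there is a weighted
Lasso solution `β̂` with `sgn(β̂) = sgn(β*)`. -/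
theorem sign_recovery_deterministic (n p : ℕ) (hn : 0 < n)
    (X : Matrix (Fin n) (Fin p) ℝ) (βstar : Fin p → ℝ) (ε : Fin n → ℝ)
    (w : Fin p → ℝ) (hw : ∀ j, 0 < w j) (lam : ℝ) (hlam : 0 < lam)
    (η : ℝ) (hη : 0 < η) (hη1 : η < 1)
    (S : Finset (Fin p)) (hS : S = Finset.univ.filter (fun j => βstar j ≠ 0))
    (hSne : S.Nonempty) (hScne : Sᶜ.Nonempty)
    (XS : Matrix (Fin n) {j // j ∈ S} ℝ) (hXS : XS = Matrix.of fun i j => X i j.1)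
    (hinv : IsUnit (XSᵀ * XS).det)
    (ha : ∀ j ∉ S,
      |∑ i, X i j *
          (XS.mulVec ((XSᵀ * XS)⁻¹.mulVec
            (fun k => sgn (βstar k.1) * w k.1))) i| ≤ w j * (1 - η))
    (hb : ∀ j ∉ S,
      |∑ i, X i j *
          (ε i - XS.mulVec ((XSᵀ * XS)⁻¹.mulVec (XSᵀ.mulVec ε)) i)| / n ≤
        η * lam * (Sᶜ.inf' hScne w) / 2)
    (hc : (Finset.univ.sup' (univ_nonempty_iff.mpr hSne.to_subtype)
            (fun k => ∑ l, |((1 / (n : ℝ)) • (XSᵀ * XS))⁻¹ k l|)) *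
          ((Finset.univ.sup' (univ_nonempty_iff.mpr hSne.to_subtype)
            (fun k : {j // j ∈ S} => |(∑ i, X i k.1 * ε i) / n|)) +
            lam * S.sup' hSne w) <
        S.inf' hSne (fun j => |βstar j|))
    (v : {j // j ∈ S} → ℝ)
    (hv : v = ((1 / (n : ℝ)) • (XSᵀ * XS))⁻¹.mulVec
      (fun k => (∑ i, X i k.1 * ε i) / n - lam * (sgn (βstar k.1) * w k.1))) :
    (∀ j ∉ S,
        |(∑ i, X i j * XS.mulVec v i) / n - (∑ i, X i j * ε i) / n| < lam * w j) ∧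
      (∀ k : {j // j ∈ S}, sgn (βstar k.1 + v k) = sgn (βstar k.1)) ∧
      ∃ βhat : Fin p → ℝ,
        (∀ β : Fin p → ℝ,
          (1 / (2 * n)) *
              (∑ i, ((∑ j, X i j * βstar j) + ε i - ∑ j, X i j * βhat j) ^ 2)
            + lam * ∑ j, w j * |βhat j| ≤
          (1 / (2 * n)) *
              (∑ i, ((∑ j, X i j * βstar j) + ε i - ∑ j, X i j * β j) ^ 2)
            + lam * ∑ j, w j * |β j|) ∧
        ∀ j, sgn (βhat j) = sgn (βstar j) :=
  sign_recovery_deterministic_general n p hn X βstar ε w hw lam hlam η hη S hS hSne hScne XS hXS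
    hinv ha hb hc v hv
end
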